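/- Let a, b, r, t be positive integers with gcd(a,b) = 1, and let ξ_d := e^{2πi/d}. Then the number of pairs (m,n) of nonnegative integers with m·a + n·b ≤ t·r equals (tr)²/(2ab) + (tr/2)·(1/a + 1/b + 1/(ab)) + (1/4)·(1 + 1/a + 1/b) + (1/12)·(a/b + b/a + 1/(ab)) + (1/a)·Σ_{j=1}^{a-1} ξ_a^{j(−tr)}/((1 − ξ_a^{jb})(1 − ξ_a^{j})) + (1/b)·Σ_{l=1}^{b-1} ξ_b^{l(−tr)}/((1 − ξ_b^{la})(1 − ξ_b^{l})). Equivalently, this expression equals 1 plus the largest index k such that N_k(a/r, b/r) ≤ t. -/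

import Mathlib

/-- `Nseq a b k` is the `k`-th term (indexed from 0) of the nondecreasing sequence listing,
with multiplicities, all numbers `m*a + n*b` with `m n : ℕ`; equivalently the least `t ≥ 0`
such that there are at least `k+1` pairs `(m,n)` with `m*a + n*b ≤ t`. -/
noncomputable def Nseq (a b : ℝ) (k : ℕ) : ℝ :=
  sInf {t : ℝ | 0 ≤ t ∧ k + 1 ≤ {p : ℕ × ℕ | (p.1 : ℝ) * a + (p.2 : ℝ) * b ≤ t}.ncard}

/-- `Mseq c d k = min {m*c + n*d : (m+1)*(n+1) ≥ k+1}`. -/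
noncomputable def Mseq (c d : ℝ) (k : ℕ) : ℝ :=
  sInf {t : ℝ | ∃ m n : ℕ, k + 1 ≤ (m + 1) * (n + 1) ∧ t = (m : ℝ) * c + (n : ℝ) * d}

/-- `dFun a b = inf {λ > 0 : N_k(1,a) ≤ λ M_k(1,b) for all k}`. -/
noncomputable def dFun (a b : ℝ) : ℝ :=
  sInf {l : ℝ | 0 < l ∧ ∀ k : ℕ, Nseq 1 a k ≤ l * Mseq 1 b k}

/-!
Write `C(T)` for the number of points `(m, n) ∈ ℕ²` with `m a + n b ≤ T` and `Q(T)` for the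
right-hand side with `T = t r`. Counting by the first coordinate gives
`C(T + a) - C(T) = ⌊(T + a) / b⌋ + 1`, and `Q` satisfies the same recursion: the polynomial part
contributes `(T + a) / b + (b + 1) / (2b)`, the `a`-sum is `a`-periodic, and the `b`-sum changes by
`∑_l ξ_b^{-l s} / (1 - ξ_b^l) = (b - 1)/2 - (s mod b)` at `s = T + a`. By symmetry the same holds
with `a` and `b` exchanged, so `Q - C` has periods `a` and `b`, hence is constant as
`gcd(a, b) = 1`. The root-of-unity sums have mean zero over a period `ab`, and a floor-sum
computation (using that `j ↦ j a mod b` permutes the residues) shows that `C` and the polynomial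
part have the same sum over `T < ab`; so the constant is `0`. The sawtooth evaluation itself is
proved the same way: a difference equation together with mean zero.

For the second claim, the values `m a / r + n b / r` lie in `(1/r) ℕ`, so `N_k(a/r, b/r) ≤ t`
exactly when at least `k + 1` points satisfy `m a + n b ≤ t r`.
-/

open Finset

namespace LatticeTriangle

section Sums

variable {K : Type*} [Field K]

lemma sum_range_natCast [CharZero K] (n : ℕ) : ∑ i ∈ range n, (i : K) = n * (n - 1) / 2 := by
  induction n with
  | zero => simp
  | succ n ih => rw [sum_range_succ, ih]; push_cast; ring

lemma sum_range_natCast_sq [CharZero K] (n : ℕ) :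
    ∑ i ∈ range n, (i : K) ^ 2 = n * (n - 1) * (2 * n - 1) / 6 := by
  induction n with
  | zero => simp
  | succ n ih => rw [sum_range_succ, ih]; push_cast; ring

lemma natCast_add_one_mod (n s : ℕ) :
    (((s + 1) % n : ℕ) : K) = (s % n : ℕ) + 1 - if n ∣ s + 1 then (n : K) else 0 := by
  have hs := congrArg (Nat.cast : ℕ → K) (Nat.div_add_mod s n)
  have hs1 := congrArg (Nat.cast : ℕ → K) (Nat.div_add_mod (s + 1) n)
  rw [Nat.succ_div] at hs1
  push_cast at hs hs1
  split_ifs at hs1 ⊢ <;> linear_combination hs1 - hs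

lemma two_mul_sum_range_div_add_one (b N : ℕ) :
    2 * b * ∑ k ∈ range N, ((k / b : ℕ) + 1 : K)
      = N ^ 2 + b * N + (N % b : ℕ) * (b - (N % b : ℕ)) := by
  induction N with
  | zero => simp
  | succ N ih =>
    have hN := congrArg (Nat.cast : ℕ → K) (Nat.div_add_mod N b)
    have hN1 := natCast_add_one_mod (K := K) b N
    push_cast at hN ⊢
    rw [sum_range_succ, mul_add, ih]
    split_ifs at hN1 with hd
    · rw [Nat.mod_eq_zero_of_dvd hd, Nat.cast_zero] at hN1
      have hr : ((N % b : ℕ) : K) = b - 1 := by linear_combination -hN1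
      rw [hr] at hN ⊢
      rw [Nat.mod_eq_zero_of_dvd hd, Nat.cast_zero]
      linear_combination 2 * hN
    · rw [hN1]
      linear_combination 2 * hN

lemma sum_range_add_one_mul_mod {M : Type*} [AddCommMonoid M] {a b : ℕ} (hab : a.Coprime b)
    (ψ : ℕ → M) : ∑ j ∈ range b, ψ ((j + 1) * a % b) = ∑ u ∈ range b, ψ u := by
  have hmaps : ∀ j ∈ range b, (j + 1) * a % b ∈ range b :=
    fun j hj => mem_range.mpr (Nat.mod_lt _ (by simp at hj; omega))
  have hinj : Set.InjOn (fun j => (j + 1) * a % b) (range b) := by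
    intro j hj j' hj' h
    have h' : j + 1 ≡ j' + 1 [MOD b] := Nat.ModEq.cancel_right_of_coprime hab.symm h
    exact (Nat.ModEq.add_right_cancel' 1 h').eq_of_lt_of_lt (mem_range.mp hj) (mem_range.mp hj')
  exact sum_nbij _ hmaps hinj (surjOn_of_injOn_of_card_le _ hmaps hinj le_rfl) fun _ _ => rfl

lemma periodic_one_of_coprime {M : Type*} {g : ℕ → M} {a b : ℕ} (ha : Function.Periodic g a)
    (hb : Function.Periodic g b) (hab : a.Coprime b) : Function.Periodic g 1 := by
  rcases Nat.lt_or_ge 1 b with hb1 | hb1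
  · obtain ⟨m, -, hm⟩ := Nat.exists_mul_mod_eq_one_of_coprime hab hb1
    have hbezout : 1 + a * m / b * b = m * a := by
      have := Nat.div_add_mod (a * m) b
      rw [hm] at this
      linarith [mul_comm a m, mul_comm b (a * m / b)]
    intro T
    have hstep := hb.nat_mul (a * m / b) (T + 1)
    simp only [Nat.cast_id] at hstep
    rw [← hstep, add_assoc, hbezout]
    simpa using ha.nat_mul m T
  · interval_cases b
    · rwa [(Nat.coprime_zero_right a).mp hab] at ha
    · exact hb

lemma eq_zero_of_periodic_one_of_sum_range_eq_zero [CharZero K] {g : ℕ → K} {n : ℕ}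
    (hg : Function.Periodic g 1) (hn : n ≠ 0) (hsum : ∑ T ∈ range n, g T = 0) (T : ℕ) :
    g T = 0 := by
  have hconst : ∀ T, g T = g 0 := fun T => by simpa using hg.nat_mul_eq T
  rw [sum_congr rfl fun T _ => hconst T, sum_const, card_range, nsmul_eq_mul] at hsum
  rw [hconst]
  exact (mul_eq_zero.mp hsum).resolve_left (Nat.cast_ne_zero.mpr hn)

end Sums

section FourierDedekind

variable {K : Type*} [Field K] {ζ : K} {n : ℕ}

lemma Icc_one_pred_eq_erase_range (n : ℕ) : Icc 1 (n - 1) = (range n).erase 0 := by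
  ext j; simp only [mem_Icc, mem_erase, mem_range]; omega

lemma geom_sum_eq_zero_of_pow_eq_one {x : K} {c : ℕ} (hx : x ≠ 1) (hc : x ^ c = 1) :
    ∑ i ∈ range c, x ^ i = 0 := by
  rw [geom_sum_eq hx, hc, sub_self, zero_div]

lemma inv_pow_mul_eq_inv_pow_pow (ζ : K) (j s : ℕ) : (ζ ^ (j * s))⁻¹ = (ζ ^ j)⁻¹ ^ s := by
  rw [pow_mul, inv_pow]

lemma _root_.IsPrimitiveRoot.sum_range_inv_pow_mul (hζ : IsPrimitiveRoot ζ n) (s : ℕ) :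
    ∑ j ∈ range n, (ζ ^ (j * s))⁻¹ = if n ∣ s then (n : K) else 0 := by
  simp_rw [mul_comm _ s, inv_pow_mul_eq_inv_pow_pow ζ s]
  split_ifs with hs
  · simp [(hζ.pow_eq_one_iff_dvd s).mpr hs]
  · refine geom_sum_eq_zero_of_pow_eq_one (inv_ne_one.mpr ?_) ?_
    · exact fun h => hs ((hζ.pow_eq_one_iff_dvd s).mp h)
    · rw [inv_pow, ← pow_mul, mul_comm, pow_mul, hζ.pow_eq_one, one_pow, inv_one]

/-- For `ζ = ξ_n` and `d j = ∏ᵢ (1 - ζ^{j aᵢ})` this is `n` times the Fourier–Dedekind sum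
`s_{-T}(a₁, …; n)` of Beck and Robins. -/
noncomputable def fourierDedekindSum (ζ : K) (n : ℕ) (d : ℕ → K) (T : ℕ) : K :=
  ∑ j ∈ Icc 1 (n - 1), (ζ ^ (j * T))⁻¹ / d j

lemma fourierDedekindSum_add_period (hζ : ζ ^ n = 1) (d : ℕ → K) (T : ℕ) :
    fourierDedekindSum ζ n d (T + n) = fourierDedekindSum ζ n d T := by
  unfold fourierDedekindSum
  refine sum_congr rfl fun j _ => ?_
  rw [mul_add, pow_add, mul_comm j n, pow_mul ζ n, hζ, one_pow, mul_one]

lemma sum_range_fourierDedekindSum (hζ : IsPrimitiveRoot ζ n) (d : ℕ → K) {c : ℕ}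
    (hc : n ∣ c) : ∑ T ∈ range c, fourierDedekindSum ζ n d T = 0 := by
  unfold fourierDedekindSum
  rw [sum_comm]
  refine sum_eq_zero fun j hj => ?_
  rw [mem_Icc] at hj
  have hζj : (ζ ^ j)⁻¹ ≠ 1 := inv_ne_one.mpr (hζ.pow_ne_one_of_pos_of_lt (by omega) (by omega))
  have hζjc : (ζ ^ j)⁻¹ ^ c = 1 := by
    obtain ⟨k, rfl⟩ := hc
    rw [inv_pow, ← pow_mul, mul_comm j, mul_assoc, pow_mul, hζ.pow_eq_one, one_pow, inv_one]
  simp_rw [← sum_div, inv_pow_mul_eq_inv_pow_pow ζ j, geom_sum_eq_zero_of_pow_eq_one hζj hζjc,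
    zero_div]

lemma fourierDedekindSum_sawtooth [CharZero K] (hζ : IsPrimitiveRoot ζ n) (hn : n ≠ 0)
    (s : ℕ) : fourierDedekindSum ζ n (fun j => 1 - ζ ^ j) s = ((n : K) - 1) / 2 - (s % n : ℕ) := by
  -- `(ζ^{-j} - 1) / (1 - ζ^j) = ζ^{-j}`, so consecutive differences are character sums.
  have hstep : ∀ s, fourierDedekindSum ζ n (fun j => 1 - ζ ^ j) (s + 1)
      - fourierDedekindSum ζ n (fun j => 1 - ζ ^ j) s = (if n ∣ s + 1 then (n : K) else 0) - 1 := by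
    intro s
    have hterm : ∀ j ∈ Icc 1 (n - 1), (ζ ^ (j * (s + 1)))⁻¹ / (1 - ζ ^ j)
        - (ζ ^ (j * s))⁻¹ / (1 - ζ ^ j) = (ζ ^ (j * (s + 1)))⁻¹ := by
      intro j hj
      rw [mem_Icc] at hj
      have hj1 : 1 - ζ ^ j ≠ 0 :=
        sub_ne_zero.mpr (hζ.pow_ne_one_of_pos_of_lt (by omega) (by omega)).symm
      have hζ0 : ζ ≠ 0 := hζ.ne_zero hn
      rw [mul_add_one, pow_add]
      field_simp
    unfold fourierDedekindSum
    rw [← sum_sub_distrib, sum_congr rfl hterm, Icc_one_pred_eq_erase_range,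
      sum_erase_eq_sub (mem_range.mpr (Nat.pos_of_ne_zero hn)), hζ.sum_range_inv_pow_mul]
    simp
  suffices h : ∀ s, fourierDedekindSum ζ n (fun j => 1 - ζ ^ j) s
      - (((n : K) - 1) / 2 - (s % n : ℕ)) = 0 from sub_eq_zero.mp (h s)
  refine eq_zero_of_periodic_one_of_sum_range_eq_zero (fun s => ?_) hn ?_
  · linear_combination hstep s + natCast_add_one_mod (K := K) n s
  · have hmod : ∑ s ∈ range n, ((s % n : ℕ) : K) = ∑ s ∈ range n, (s : K) :=
      sum_congr rfl fun s hs => by rw [Nat.mod_eq_of_lt (mem_range.mp hs)]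
    rw [sum_sub_distrib, sum_range_fourierDedekindSum hζ _ dvd_rfl, sum_sub_distrib, sum_const,
      card_range, nsmul_eq_mul, hmod, sum_range_natCast]
    ring

lemma fourierDedekindSum_add_coprime {b : ℕ} (hζ : IsPrimitiveRoot ζ n) (hb : n.Coprime b)
    (T : ℕ) : fourierDedekindSum ζ n (fun j => (1 - ζ ^ (j * b)) * (1 - ζ ^ j)) (T + b)
      = fourierDedekindSum ζ n (fun j => (1 - ζ ^ (j * b)) * (1 - ζ ^ j)) T
        + fourierDedekindSum ζ n (fun j => 1 - ζ ^ j) (T + b) := by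
  unfold fourierDedekindSum
  rw [← sum_add_distrib]
  refine sum_congr rfl fun j hj => ?_
  rw [mem_Icc] at hj
  have hζ0 : ζ ≠ 0 := hζ.ne_zero (by omega)
  have hj1 : 1 - ζ ^ j ≠ 0 :=
    sub_ne_zero.mpr (hζ.pow_ne_one_of_pos_of_lt (by omega) (by omega)).symm
  have hjb : 1 - ζ ^ (j * b) ≠ 0 := by
    refine sub_ne_zero.mpr fun h => ?_
    have hdvd : n ∣ j := hb.dvd_of_dvd_mul_right ((hζ.pow_eq_one_iff_dvd _).mp h.symm)
    exact absurd (Nat.le_of_dvd (by omega) hdvd) (by omega)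
  rw [mul_add, pow_add]
  field_simp
  ring

end FourierDedekind

section LatticeCount

noncomputable def latticeCount (a b T : ℕ) : ℕ := {p : ℕ × ℕ | p.1 * a + p.2 * b ≤ T}.ncard

variable {a b : ℕ}

lemma latticeCount_comm (a b T : ℕ) : latticeCount a b T = latticeCount b a T := by
  unfold latticeCount
  rw [← Set.ncard_image_of_injective _ Prod.swap_injective, Set.image_swap_eq_preimage_swap]
  congr 1
  ext p
  simp [add_comm]

lemma latticeCount_eq_sum_range (ha : 0 < a) (hb : 0 < b) (T : ℕ) :
    latticeCount a b T = ∑ m ∈ range (T / a + 1), ((T - m * a) / b + 1) := by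
  have hset : {p : ℕ × ℕ | p.1 * a + p.2 * b ≤ T} =
      ((range (T / a + 1)).sigma fun m => range ((T - m * a) / b + 1)).map
        (Equiv.sigmaEquivProd ℕ ℕ).toEmbedding := by
    ext ⟨m, n⟩
    have key : m * a + n * b ≤ T ↔ m < T / a + 1 ∧ n < (T - m * a) / b + 1 := by
      rw [Nat.lt_add_one_iff, Nat.lt_add_one_iff, Nat.le_div_iff_mul_le ha,
        Nat.le_div_iff_mul_le hb]
      omega
    simp [key]
  rw [latticeCount, hset, Set.ncard_coe_finset, card_map, card_sigma]
  simp

lemma latticeCount_add_left (ha : 0 < a) (hb : 0 < b) (T : ℕ) :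
    latticeCount a b (T + a) = latticeCount a b T + ((T + a) / b + 1) := by
  rw [latticeCount_eq_sum_range ha hb, latticeCount_eq_sum_range ha hb, Nat.add_div_right T ha,
    sum_range_succ']
  congr 1
  · refine sum_congr rfl fun m _ => ?_
    rw [add_one_mul, Nat.add_sub_add_right]
  · simp

lemma div_add_one_le_latticeCount (ha : 0 < a) (hb : 0 < b) (T : ℕ) :
    T / a + 1 ≤ latticeCount a b T := by
  rw [latticeCount_eq_sum_range ha hb]
  simpa using card_nsmul_le_sum (range (T / a + 1)) _ 1 fun _ _ => Nat.le_add_left 1 _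

lemma finite_setOf_mul_add_mul_le (ha : 0 < a) (hb : 0 < b) (T : ℕ) :
    {p : ℕ × ℕ | p.1 * a + p.2 * b ≤ T}.Finite :=
  (Set.finite_Iic (T, T)).subset fun p hp => by
    have := Nat.le_mul_of_pos_right p.1 ha
    have := Nat.le_mul_of_pos_right p.2 hb
    simp only [Set.mem_ofPred_eq] at hp
    exact ⟨by omega, by omega⟩

lemma latticeCount_mono (ha : 0 < a) (hb : 0 < b) : Monotone (latticeCount a b) :=
  fun _ T hST => Set.ncard_le_ncard (fun _ hp => le_trans hp hST)
    (finite_setOf_mul_add_mul_le ha hb T)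

lemma sum_range_latticeCount_eq_sum_sum (ha : 0 < a) (hb : 0 < b) :
    ∑ T ∈ range (a * b), latticeCount a b T
      = ∑ j ∈ range b, ∑ k ∈ range ((j + 1) * a), (k / b + 1) := by
  simp_rw [latticeCount_eq_sum_range ha hb]
  rw [sum_comm' (t' := range b) (s' := fun m => Ico (m * a) (a * b))]
  · rw [← sum_range_reflect]
    refine sum_congr rfl fun m hm => ?_
    have hm : m < b := mem_range.mp hm
    have hlen : a * b - (b - 1 - m) * a = (m + 1) * a := by
      rw [mul_comm a b, ← Nat.sub_mul]; congr 1; omega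
    rw [sum_Ico_eq_sum_range, hlen]
    exact sum_congr rfl fun k _ => by rw [Nat.add_sub_cancel_left]
  · intro T m
    simp only [mem_range, mem_Ico, Nat.lt_add_one_iff, Nat.le_div_iff_mul_le ha]
    constructor
    · rintro ⟨hT, hm⟩
      exact ⟨⟨hm, hT⟩, Nat.lt_of_mul_lt_mul_right (a := a) (by linarith)⟩
    · rintro ⟨⟨hm, hT⟩, -⟩
      exact ⟨hT, hm⟩

end LatticeCount

section QuasiPolynomial

variable {K : Type*} [Field K] {a b : ℕ}

noncomputable def polynomialPart (a b T : ℕ) : K :=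
  (T : K) ^ 2 / (2 * a * b) + (T : K) / 2 * (1 / a + 1 / b + 1 / (a * b))
    + 1 / 4 * (1 + 1 / a + 1 / b) + 1 / 12 * ((a : K) / b + (b : K) / a + 1 / (a * b))

lemma polynomialPart_comm (a b T : ℕ) : (polynomialPart a b T : K) = polynomialPart b a T := by
  unfold polynomialPart; ring

lemma polynomialPart_add_left [CharZero K] (ha : 0 < a) (hb : 0 < b) (T : ℕ) :
    (polynomialPart a b (T + a) : K)
      = polynomialPart a b T + ((T : K) + a) / b + 1 / 2 + 1 / (2 * b) := by
  have ha0 : (a : K) ≠ 0 := Nat.cast_ne_zero.mpr ha.ne'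
  have hb0 : (b : K) ≠ 0 := Nat.cast_ne_zero.mpr hb.ne'
  unfold polynomialPart
  push_cast
  field_simp
  ring

lemma sum_range_polynomialPart [CharZero K] (a b N : ℕ) :
    ∑ T ∈ range N, (polynomialPart a b T : K)
      = N * (N - 1) * (2 * N - 1) / 6 / (2 * a * b)
        + N * (N - 1) / 2 / 2 * (1 / a + 1 / b + 1 / (a * b))
        + N * (1 / 4 * (1 + 1 / a + 1 / b) + 1 / 12 * ((a : K) / b + (b : K) / a + 1 / (a * b))) := by
  simp only [polynomialPart, sum_add_distrib, ← sum_div, ← sum_mul, sum_const, card_range,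
    nsmul_eq_mul, sum_range_natCast, sum_range_natCast_sq]
  ring

lemma two_mul_sum_range_latticeCount [CharZero K] (ha : 0 < a) (hb : 0 < b) (hab : a.Coprime b) :
    2 * b * ∑ T ∈ range (a * b), (latticeCount a b T : K)
      = a ^ 2 * (b * (b + 1) * (2 * b + 1) / 6) + a * b * (b * (b + 1) / 2)
        + (b * (b * (b - 1) / 2) - b * (b - 1) * (2 * b - 1) / 6) := by
  have hshift : ∑ j ∈ range b, ((j : K) + 1) = b * (b + 1) / 2 := by
    have := sum_range_succ' (fun j => (j : K)) b
    simp only [Nat.cast_add, Nat.cast_one, Nat.cast_zero, add_zero] at this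
    rw [← this, sum_range_natCast]; push_cast; ring
  have hshift_sq : ∑ j ∈ range b, ((j : K) + 1) ^ 2 = (b : K) * (b + 1) * (2 * b + 1) / 6 := by
    have := sum_range_succ' (fun j => (j : K) ^ 2) b
    simp only [Nat.cast_add, Nat.cast_one, Nat.cast_zero, add_zero, ne_eq, OfNat.ofNat_ne_zero,
      not_false_eq_true, zero_pow] at this
    rw [← this, sum_range_natCast_sq]; push_cast; ring
  have hparabola : ∑ u ∈ range b, (u : K) * (b - u)
      = b * (b * (b - 1) / 2) - b * (b - 1) * (2 * b - 1) / 6 := by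
    simp_rw [mul_sub, mul_comm _ (b : K), ← sq]
    rw [sum_sub_distrib, ← mul_sum, sum_range_natCast, sum_range_natCast_sq]
    ring
  rw [← hshift, ← hshift_sq, ← hparabola, ← Nat.cast_sum,
    sum_range_latticeCount_eq_sum_sum ha hb, Nat.cast_sum, mul_sum]
  simp_rw [Nat.cast_sum, Nat.cast_add, Nat.cast_one, two_mul_sum_range_div_add_one]
  rw [sum_add_distrib, sum_range_add_one_mul_mod hab (fun u => (u : K) * (b - u)),
    sum_add_distrib, mul_sum, mul_sum]
  push_cast
  congr 1; congr 1 <;> refine sum_congr rfl fun j _ => by ring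

lemma sum_range_latticeCount [CharZero K] (ha : 0 < a) (hb : 0 < b) (hab : a.Coprime b) :
    ∑ T ∈ range (a * b), (latticeCount a b T : K) = ∑ T ∈ range (a * b), polynomialPart a b T := by
  have ha0 : (a : K) ≠ 0 := Nat.cast_ne_zero.mpr ha.ne'
  have hb0 : (b : K) ≠ 0 := Nat.cast_ne_zero.mpr hb.ne'
  rw [← mul_right_inj' (mul_ne_zero two_ne_zero hb0), two_mul_sum_range_latticeCount ha hb hab,
    sum_range_polynomialPart]
  push_cast
  field_simp
  ring

variable {ζ η : K}

/-- With `ζ = ξ_a`, `η = ξ_b`, this is the right-hand side of the formula, as a function of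
`T = t r`. -/
noncomputable def ehrhartQuasiPolynomial (a b : ℕ) (ζ η : K) (T : ℕ) : K :=
  polynomialPart a b T + fourierDedekindSum ζ a (fun j => (1 - ζ ^ (j * b)) * (1 - ζ ^ j)) T / a
    + fourierDedekindSum η b (fun l => (1 - η ^ (l * a)) * (1 - η ^ l)) T / b

lemma ehrhartQuasiPolynomial_comm (a b : ℕ) (ζ η : K) (T : ℕ) :
    ehrhartQuasiPolynomial a b ζ η T = ehrhartQuasiPolynomial b a η ζ T := by
  unfold ehrhartQuasiPolynomial
  rw [polynomialPart_comm]
  ring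

lemma ehrhartQuasiPolynomial_add_left [CharZero K] (hζ : IsPrimitiveRoot ζ a)
    (hη : IsPrimitiveRoot η b) (ha : 0 < a) (hb : 0 < b) (hab : a.Coprime b) (T : ℕ) :
    ehrhartQuasiPolynomial a b ζ η (T + a)
      = ehrhartQuasiPolynomial a b ζ η T + ((T + a) / b + 1 : ℕ) := by
  have hb0 : (b : K) ≠ 0 := Nat.cast_ne_zero.mpr hb.ne'
  have hdiv := congrArg (Nat.cast : ℕ → K) (Nat.div_add_mod (T + a) b)
  unfold ehrhartQuasiPolynomial
  rw [polynomialPart_add_left ha hb, fourierDedekindSum_add_period hζ.pow_eq_one,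
    fourierDedekindSum_add_coprime hη hab.symm, fourierDedekindSum_sawtooth hη hb.ne']
  push_cast at hdiv ⊢
  field_simp
  linear_combination -2 * hdiv

lemma sum_range_ehrhartQuasiPolynomial (hζ : IsPrimitiveRoot ζ a) (hη : IsPrimitiveRoot η b) :
    ∑ T ∈ range (a * b), ehrhartQuasiPolynomial a b ζ η T
      = ∑ T ∈ range (a * b), polynomialPart a b T := by
  unfold ehrhartQuasiPolynomial
  rw [sum_add_distrib, sum_add_distrib, ← sum_div, ← sum_div,
    sum_range_fourierDedekindSum hζ _ (dvd_mul_right a b),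
    sum_range_fourierDedekindSum hη _ (dvd_mul_left b a), zero_div, zero_div, add_zero, add_zero]

theorem ehrhartQuasiPolynomial_eq_latticeCount [CharZero K] (hζ : IsPrimitiveRoot ζ a)
    (hη : IsPrimitiveRoot η b) (ha : 0 < a) (hb : 0 < b) (hab : a.Coprime b) (T : ℕ) :
    ehrhartQuasiPolynomial a b ζ η T = latticeCount a b T := by
  set g : ℕ → K := fun T => ehrhartQuasiPolynomial a b ζ η T - latticeCount a b T
  have hga : Function.Periodic g a := fun T => by
    simp only [g]
    rw [ehrhartQuasiPolynomial_add_left hζ hη ha hb hab, latticeCount_add_left ha hb]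
    push_cast
    ring
  have hgb : Function.Periodic g b := fun T => by
    simp only [g]
    rw [ehrhartQuasiPolynomial_comm, latticeCount_comm,
      ehrhartQuasiPolynomial_add_left hη hζ hb ha hab.symm, latticeCount_add_left hb ha,
      ehrhartQuasiPolynomial_comm, latticeCount_comm]
    push_cast
    ring
  have hsum : ∑ T ∈ range (a * b), g T = 0 := by
    rw [sum_sub_distrib, sum_range_ehrhartQuasiPolynomial hζ hη, sum_range_latticeCount ha hb hab,
      sub_self]
  exact sub_eq_zero.mp (eq_zero_of_periodic_one_of_sum_range_eq_zero
    (periodic_one_of_coprime hga hgb hab) (Nat.mul_ne_zero ha.ne' hb.ne') hsum T)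

end QuasiPolynomial

section Nseq

variable {a b r : ℕ}

lemma setOf_div_le_eq_setOf_le_floor (hr : 0 < r) {x : ℝ} (hx : 0 ≤ x) :
    {p : ℕ × ℕ | (p.1 : ℝ) * ((a : ℝ) / r) + (p.2 : ℝ) * ((b : ℝ) / r) ≤ x}
      = {p : ℕ × ℕ | p.1 * a + p.2 * b ≤ ⌊x * r⌋₊} := by
  have hr0 : (0 : ℝ) < r := Nat.cast_pos.mpr hr
  ext p
  simp only [Set.mem_ofPred_eq]
  rw [Nat.le_floor_iff (by positivity), ← div_le_iff₀ hr0]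
  push_cast
  rw [add_div, mul_div_assoc, mul_div_assoc]

lemma Nseq_le_iff (ha : 0 < a) (hb : 0 < b) (hr : 0 < r) (k t : ℕ) :
    Nseq ((a : ℝ) / r) ((b : ℝ) / r) k ≤ t ↔ k + 1 ≤ latticeCount a b (t * r) := by
  have hr0 : (0 : ℝ) < r := Nat.cast_pos.mpr hr
  have hmem : ∀ x : ℝ, 0 ≤ x → (k + 1 ≤ {p : ℕ × ℕ | (p.1 : ℝ) * ((a : ℝ) / r)
      + (p.2 : ℝ) * ((b : ℝ) / r) ≤ x}.ncard ↔ k + 1 ≤ latticeCount a b ⌊x * r⌋₊) := fun x hx => by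
    rw [setOf_div_le_eq_setOf_le_floor hr hx, latticeCount]
  unfold Nseq
  constructor
  · intro h
    have hne : {x : ℝ | 0 ≤ x ∧ k + 1 ≤ {p : ℕ × ℕ | (p.1 : ℝ) * ((a : ℝ) / r)
        + (p.2 : ℝ) * ((b : ℝ) / r) ≤ x}.ncard}.Nonempty := by
      refine ⟨(k * a : ℕ) / r, by positivity, (hmem _ (by positivity)).mpr ?_⟩
      rw [div_mul_cancel₀ _ hr0.ne', Nat.floor_natCast]
      simpa [Nat.mul_div_cancel k ha] using div_add_one_le_latticeCount ha hb (k * a)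
    -- Only the points below `t` are counted at some `x < t + 1/r`, as `⌊x r⌋ ≤ t r`.
    obtain ⟨x, ⟨hx0, hx⟩, hxt⟩ :=
      exists_lt_of_csInf_lt hne (h.trans_lt (lt_add_of_pos_right (t : ℝ) (one_div_pos.mpr hr0)))
    refine ((hmem x hx0).mp hx).trans (latticeCount_mono ha hb ?_)
    rw [← Nat.lt_add_one_iff, Nat.floor_lt (by positivity)]
    push_cast
    calc x * r < (t + 1 / r) * r := by gcongr
      _ = t * r + 1 := by field_simp
  · intro h
    refine csInf_le ⟨0, fun x hx => hx.1⟩ ⟨t.cast_nonneg, (hmem _ t.cast_nonneg).mpr ?_⟩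
    rwa [← Nat.cast_mul, Nat.floor_natCast]

end Nseq

end LatticeTriangle

open Complex in
theorem ehrhart_count (a b r t : ℕ) (ha : 0 < a) (hb : 0 < b) (hr : 0 < r)
    (hab : Nat.Coprime a b) :
    (({p : ℕ × ℕ | p.1 * a + p.2 * b ≤ t * r}.ncard : ℂ) =
      ((t * r : ℂ)) ^ 2 / (2 * a * b)
        + (t * r : ℂ) / 2 * (1 / a + 1 / b + 1 / (a * b))
        + (1 / 4) * (1 + 1 / a + 1 / b)
        + (1 / 12) * ((a : ℂ) / b + (b : ℂ) / a + 1 / (a * b))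
        + (1 / a) * ∑ j ∈ Finset.Icc 1 (a - 1),
            Complex.exp (2 * Real.pi * I / a) ^ (-(j * t * r : ℤ)) /
              ((1 - Complex.exp (2 * Real.pi * I / a) ^ (j * b)) *
                (1 - Complex.exp (2 * Real.pi * I / a) ^ j))
        + (1 / b) * ∑ l ∈ Finset.Icc 1 (b - 1),
            Complex.exp (2 * Real.pi * I / b) ^ (-(l * t * r : ℤ)) /
              ((1 - Complex.exp (2 * Real.pi * I / b) ^ (l * a)) *
                (1 - Complex.exp (2 * Real.pi * I / b) ^ l))) ∧
    {p : ℕ × ℕ | p.1 * a + p.2 * b ≤ t * r}.ncard =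
      sSup {k : ℕ | Nseq ((a : ℝ) / r) ((b : ℝ) / r) k ≤ t} + 1 := by
  
  have hpow : ∀ (ξ : ℂ) (j : ℕ), ξ ^ (-(j * t * r : ℤ)) = (ξ ^ (j * (t * r)))⁻¹ := fun ξ j => by
    rw [zpow_neg, ← mul_assoc]
    norm_cast
  change (LatticeTriangle.latticeCount a b (t * r) : ℂ) = _
    ∧ LatticeTriangle.latticeCount a b (t * r) = _
  constructor
  · rw [← LatticeTriangle.ehrhartQuasiPolynomial_eq_latticeCount
      (isPrimitiveRoot_exp a ha.ne') (isPrimitiveRoot_exp b hb.ne') ha hb hab]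
    simp only [LatticeTriangle.ehrhartQuasiPolynomial, LatticeTriangle.polynomialPart,
      LatticeTriangle.fourierDedekindSum, hpow]
    push_cast
    ring
  · have hpos : 1 ≤ LatticeTriangle.latticeCount a b (t * r) :=
      (Nat.le_add_left 1 _).trans (LatticeTriangle.div_add_one_le_latticeCount ha hb (t * r))
    have hset : {k : ℕ | Nseq ((a : ℝ) / r) ((b : ℝ) / r) k ≤ t}
        = Set.Iic (LatticeTriangle.latticeCount a b (t * r) - 1) := by
      ext k
      rw [Set.mem_ofPred_eq, LatticeTriangle.Nseq_le_iff ha hb hr, Set.mem_Iic]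
      omega
    rw [hset, csSup_Iic]
    omega
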